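/- arXiv:2006.10164 — 4 statements merged into one kernel-verified Lean document; each statement's English description precedes it below -/
import Mathlib

section
/- Let E be a real inner product space, A : E → E a linear map, and φ, ψ ∈ E vectors with Aφ = λφ and Aψ = μψ for real numbers λ ≠ 0 and μ; set r = μ/λ. Fix c ∈ ℝ and m ∈ ℕ. Define v_{m+1} = φ + c·r^{m+1}·ψ and v_{m+2} = φ + c·r^{m+2}·ψ, and recursively for k ≥ 1 set u_{m+k+1} = (1 − γ_{m+k})·v_{m+k+1} + γ_{m+k}·v_{m+k} with γ_{m+k} = −r^k, and v_{m+k+2} = λ^{−1}·A u_{m+k+1}. Then for every k ≥ 1, u_{m+k+1} = φ + c·r^{m + (k+1)(k+2)/2}·ψ and v_{m+k+2} = φ + c·r^{m + 1 + (k+1)(k+2)/2}·ψ. -/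
/-- Idealized extrapolation: with exact extrapolation parameter `γ_{m+k} = -r^k`, the
second eigencomponent of the accelerated iterate decays super-geometrically. -/
theorem idealized_extrapolation {E : Type*} [AddCommGroup E] [Module ℝ E]
    (A : E →ₗ[ℝ] E) (φ ψ : E) (lam mu : ℝ) (hlam : lam ≠ 0)
    (hφ : A φ = lam • φ) (hψ : A ψ = mu • ψ)
    (r : ℝ) (hr : r = mu / lam) (c : ℝ) (m : ℕ)
    (u v : ℕ → E)
    (hv1 : v (m + 1) = φ + (c * r ^ (m + 1)) • ψ)
    (hv2 : v (m + 2) = φ + (c * r ^ (m + 2)) • ψ)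
    (hu : ∀ k, 1 ≤ k →
      u (m + k + 1) = (1 - (-(r ^ k))) • v (m + k + 1) + (-(r ^ k)) • v (m + k))
    (hvrec : ∀ k, 1 ≤ k → v (m + k + 2) = lam⁻¹ • A (u (m + k + 1))) :
    ∀ k, 1 ≤ k →
      u (m + k + 1) = φ + (c * r ^ (m + (k + 1) * (k + 2) / 2)) • ψ ∧
      v (m + k + 2) = φ + (c * r ^ (m + 1 + (k + 1) * (k + 2) / 2)) • ψ := by
  have hmu : mu = r * lam := by rw [hr]; field_simp
  -- the accelerated iterate, given formulas for the two previous `v`'s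
  have ustep : ∀ n a b : ℕ, a = b + (n + 1) →
      v (m + (n + 1) + 1) = φ + (c * r ^ a) • ψ →
      v (m + (n + 1)) = φ + (c * r ^ b) • ψ →
      u (m + (n + 1) + 1) = φ + (c * r ^ (a + (n + 1))) • ψ := by
    intro n a b hab h1 h0
    rw [hu (n + 1) (by omega), h1, h0]
    have e1 : r ^ a = r ^ b * r ^ (n + 1) := by rw [← pow_add]; congr 1
    have e2 : r ^ (a + (n + 1)) = r ^ b * (r ^ (n + 1) * r ^ (n + 1)) := by
      rw [← pow_add, ← pow_add]; congr 1; omega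
    rw [e1, e2]
    module
  -- the next `v`, given a formula for `u`
  have vstep : ∀ n a : ℕ, u (m + (n + 1) + 1) = φ + (c * r ^ a) • ψ →
      v (m + (n + 1) + 2) = φ + (c * r ^ (a + 1)) • ψ := by
    intro n a h
    rw [hvrec (n + 1) (by omega), h, map_add, map_smul, hφ, hψ, hmu, pow_succ]
    match_scalars <;> field_simp <;> ring
  -- main induction: formula for all `v`'s
  have key : ∀ k : ℕ, v (m + k + 1) = φ + (c * r ^ (m + 1 + k * (k + 1) / 2)) • ψ := by
    intro k
    induction k using Nat.strong_induction_on with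
    | _ k ih =>
      match k with
      | 0 => simpa using hv1
      | 1 =>
        have : m + 1 + 1 * (1 + 1) / 2 = m + 2 := by omega
        rw [this]; exact hv2
      | (n + 2) =>
        have h1 := ih (n + 1) (by omega)
        have h0 := ih n (by omega)
        have hab : m + 1 + (n + 1) * (n + 1 + 1) / 2 = (m + 1 + n * (n + 1) / 2) + (n + 1) := by
          have : (n + 1) * (n + 1 + 1) = n * (n + 1) + 2 * (n + 1) := by ring
          omega
        have hu' := ustep n (m + 1 + (n + 1) * (n + 1 + 1) / 2) (m + 1 + n * (n + 1) / 2)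
          hab h1 h0
        have hv' := vstep n _ hu'
        have hidx : m + (n + 2) + 1 = m + (n + 1) + 2 := by omega
        have hE : m + 1 + (n + 1) * (n + 1 + 1) / 2 + (n + 1) + 1
            = m + 1 + (n + 2) * (n + 2 + 1) / 2 := by
          obtain ⟨t, ht⟩ := Nat.even_mul_succ_self n
          have e1 : (n + 1) * (n + 1 + 1) = n * (n + 1) + 2 * (n + 1) := by ring
          have e2 : (n + 2) * (n + 2 + 1) = n * (n + 1) + 4 * n + 6 := by ring
          omega
        rw [hidx, hv', hE]
  intro k hk
  obtain ⟨n, rfl⟩ : ∃ n, k = n + 1 := ⟨k - 1, by omega⟩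
  have h1 := key (n + 1)
  have h0 := key n
  have hab : m + 1 + (n + 1) * (n + 1 + 1) / 2 = (m + 1 + n * (n + 1) / 2) + (n + 1) := by
    have : (n + 1) * (n + 1 + 1) = n * (n + 1) + 2 * (n + 1) := by ring
    omega
  have hu' := ustep n (m + 1 + (n + 1) * (n + 1 + 1) / 2) (m + 1 + n * (n + 1) / 2) hab h1 h0
  obtain ⟨t, ht⟩ := Nat.even_mul_succ_self n
  have e1 : (n + 1) * (n + 1 + 1) = n * (n + 1) + 2 * (n + 1) := by ring
  have e2 : (n + 1 + 1) * (n + 1 + 2) = n * (n + 1) + 4 * n + 6 := by ring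
  have e3 : (n + 2) * (n + 2 + 1) = n * (n + 1) + 4 * n + 6 := by ring
  constructor
  · have hE : m + 1 + (n + 1) * (n + 1 + 1) / 2 + (n + 1)
        = m + (n + 1 + 1) * (n + 1 + 2) / 2 := by omega
    rw [hu', hE]
  · have h2 := key (n + 2)
    have hidx : m + (n + 1) + 2 = m + (n + 2) + 1 := by omega
    have hE : m + 1 + (n + 2) * (n + 2 + 1) / 2 = m + 1 + (n + 1 + 1) * (n + 1 + 2) / 2 := by
      omega
    rw [hidx, h2, hE]
end

section
/- Let E be a real inner product space, A : E → E a linear map, and φ, ψ ∈ E orthonormal vectors with Aφ = λφ and Aψ = μψ where λ > 0 and 0 ≤ μ < λ; set r = μ/λ. Let c ∈ ℝ and define the power iteration u₀ = φ + c·ψ, hₙ = ‖uₙ‖, xₙ = hₙ⁻¹uₙ, u_{n+1} = Axₙ. Then for every n ≥ 1, the Rayleigh quotient λ_{n−1} = ⟪uₙ, x_{n−1}⟫ satisfies λ_{n−1} = λ·(1 + c²·r^{2n−1})/(1 + c²·r^{2(n−1)}), and consequently the eigenvalue error is λ − λ_{n−1} = λ·(1 − r)·c²·r^{2(n−1)}/(1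 + c²·r^{2(n−1)}). -/
open RealInnerProductSpace

/-- Closed form of the Rayleigh quotients of the power iteration started from
`u₀ = φ + c • ψ`, and the resulting eigenvalue error. -/
theorem power_iteration_rayleigh_quotient {E : Type*}
    [NormedAddCommGroup E] [InnerProductSpace ℝ E]
    (A : E →ₗ[ℝ] E) (φ ψ : E) (lam mu : ℝ)
    (hφn : ‖φ‖ = 1) (hψn : ‖ψ‖ = 1) (hortho : ⟪φ, ψ⟫ = 0)
    (hφ : A φ = lam • φ) (hψ : A ψ = mu • ψ)
    (hlam : 0 < lam) (hmu0 : 0 ≤ mu) (hmu : mu < lam)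
    (r : ℝ) (hr : r = mu / lam) (c : ℝ)
    (u x : ℕ → E)
    (hu0 : u 0 = φ + c • ψ)
    (hx : ∀ n, x n = (‖u n‖)⁻¹ • u n)
    (hurec : ∀ n, u (n + 1) = A (x n)) :
    ∀ n, 1 ≤ n →
      ⟪u n, x (n - 1)⟫ =
        lam * (1 + c ^ 2 * r ^ (2 * n - 1)) / (1 + c ^ 2 * r ^ (2 * (n - 1))) ∧
      lam - ⟪u n, x (n - 1)⟫ =
        lam * (1 - r) * c ^ 2 * r ^ (2 * (n - 1)) / (1 + c ^ 2 * r ^ (2 * (n - 1))) := by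
  have hφφ : ⟪φ, φ⟫ = 1 := by
    rw [real_inner_self_eq_norm_sq, hφn]; norm_num
  have hψψ : ⟪ψ, ψ⟫ = 1 := by
    rw [real_inner_self_eq_norm_sq, hψn]; norm_num
  have hψφ : ⟪ψ, φ⟫ = 0 := by rw [real_inner_comm]; exact hortho
  set v : ℕ → E := fun n => (lam ^ n) • φ + (c * mu ^ n) • ψ with hv
  have hinner : ∀ m k, ⟪v m, v k⟫ = lam ^ (m + k) + c ^ 2 * mu ^ (m + k) := by
    intro m k
    simp only [hv, inner_add_left, inner_add_right, real_inner_smul_left,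
      real_inner_smul_right, hφφ, hψψ, hortho, hψφ]
    rw [pow_add, pow_add]; ring
  have hr0 : 0 ≤ r := by rw [hr]; positivity
  have hnormsq : ∀ n, ‖v n‖ ^ 2 = lam ^ (2 * n) + c ^ 2 * mu ^ (2 * n) := by
    intro n
    rw [← real_inner_self_eq_norm_sq, hinner, two_mul]
  have hpos : ∀ n, (0:ℝ) < lam ^ (2 * n) + c ^ 2 * mu ^ (2 * n) := by
    intro n; positivity
  have hvnorm : ∀ n, 0 < ‖v n‖ := by
    intro n
    have := hnormsq n
    nlinarith [hpos n, norm_nonneg (v n)]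
  -- key : x n = ‖v n‖⁻¹ • v n (plus scalar relation for u)
  have hAv : ∀ n, A (v n) = v (n + 1) := by
    intro n
    simp only [hv, map_add, map_smul, hφ, hψ, smul_smul, pow_succ]
    ring_nf
  have key : ∀ n, x n = (‖v n‖)⁻¹ • v n := by
    intro n
    have : ∀ n, ∃ t : ℝ, 0 < t ∧ u n = t • v n := by
      intro n
      induction n with
      | zero =>
        refine ⟨1, one_pos, ?_⟩
        simp [hu0, hv]
      | succ m ih =>
        obtain ⟨t, ht, hum⟩ := ih
        refine ⟨(‖v m‖)⁻¹, inv_pos.mpr (hvnorm m), ?_⟩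
        rw [hurec m, hx m, hum, map_smul, map_smul, hAv, norm_smul,
          Real.norm_eq_abs, abs_of_pos ht, smul_smul]
        congr 1
        field_simp [ht.ne', (hvnorm m).ne']
    obtain ⟨t, ht, hum⟩ := this n
    rw [hx n, hum, norm_smul, Real.norm_eq_abs, abs_of_pos ht, smul_smul,
      mul_inv]
    congr 1
    field_simp [ht.ne', (hvnorm n).ne']
  intro n hn
  obtain ⟨m, rfl⟩ : ∃ m, n = m + 1 := ⟨n - 1, (Nat.succ_pred_eq_of_pos hn).symm⟩
  have hinner_eq : ⟪u (m + 1), x m⟫ =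
      (lam ^ (2 * m + 1) + c ^ 2 * mu ^ (2 * m + 1)) /
        (lam ^ (2 * m) + c ^ 2 * mu ^ (2 * m)) := by
    have hD : ‖v m‖ ≠ 0 := (hvnorm m).ne'
    rw [hurec m, key m, map_smul, hAv, real_inner_smul_left, real_inner_smul_right,
      hinner, show m + 1 + m = 2 * m + 1 by ring, ← hnormsq,
      show (‖v m‖ : ℝ) ^ 2 = ‖v m‖ * ‖v m‖ from pow_two _,
      div_eq_mul_inv, mul_inv]
    ring
  have hmu_eq : mu = lam * r := by
    rw [hr]; field_simp
  have hden : (0:ℝ) < 1 + c ^ 2 * r ^ (2 * m) := by positivity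
  have hsimp : (m + 1 : ℕ) - 1 = m := rfl
  have h2n1 : 2 * (m + 1) - 1 = 2 * m + 1 := by omega
  have hQ : ⟪u (m + 1), x m⟫ =
      lam * (1 + c ^ 2 * r ^ (2 * m + 1)) / (1 + c ^ 2 * r ^ (2 * m)) := by
    rw [hinner_eq, hmu_eq]
    have hlamp : (0:ℝ) < lam ^ (2 * m) := by positivity
    rw [mul_pow, mul_pow]
    rw [div_eq_div_iff]
    · ring
    · have : (0:ℝ) < lam ^ (2*m) + c ^ 2 * (lam ^ (2*m) * r ^ (2*m)) := by positivity
      linarith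
    · positivity
  rw [hsimp, h2n1]
  refine ⟨hQ, ?_⟩
  rw [hQ]
  field_simp
  ring
end

section
/- Let E be a real inner product space, A : E → E a linear map, and φ, ψ ∈ E orthonormal vectors with Aφ = λφ and Aψ = μψ where λ > 0 and 0 ≤ μ < λ; set r = μ/λ. Let c > 0 and define the power iteration u₀ = φ + c·ψ, hₙ = ‖uₙ‖, xₙ = hₙ⁻¹uₙ, u_{n+1} = Axₙ, with λ_{n−1} = ⟪uₙ, x_{n−1}⟫. Then for every n ≥ 1 the residual dₙ = uₙ − λ_{n−1}·x_{n−1} satisfies dₙ = λ·(1−r)·c·r^{n−1}·(1 + c²·r^{2(n−1)})^{−3/2}·(c·r^{n−1}·φ − ψ), and its norm is ‖dₙ‖ = λ·(1−r)·c·r^{n−1}/(1 + c²·r^{2(n−1)}). -/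
open RealInnerProductSpace

/-- Closed form of the residuals of the power iteration started from
`u₀ = φ + c • ψ`, and their norms. -/
theorem power_iteration_residual {E : Type*}
    [NormedAddCommGroup E] [InnerProductSpace ℝ E]
    (A : E →ₗ[ℝ] E) (φ ψ : E) (lam mu : ℝ)
    (hφn : ‖φ‖ = 1) (hψn : ‖ψ‖ = 1) (hortho : ⟪φ, ψ⟫ = 0)
    (hφ : A φ = lam • φ) (hψ : A ψ = mu • ψ)
    (hlam : 0 < lam) (hmu0 : 0 ≤ mu) (hmu : mu < lam)
    (r : ℝ) (hr : r = mu / lam) (c : ℝ) (hc : 0 < c)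
    (u x : ℕ → E) (lamseq : ℕ → ℝ) (d : ℕ → E)
    (hu0 : u 0 = φ + c • ψ)
    (hx : ∀ n, x n = (‖u n‖)⁻¹ • u n)
    (hurec : ∀ n, u (n + 1) = A (x n))
    (hlamseq : ∀ n, 1 ≤ n → lamseq (n - 1) = ⟪u n, x (n - 1)⟫)
    (hd : ∀ n, 1 ≤ n → d n = u n - lamseq (n - 1) • x (n - 1)) :
    ∀ n, 1 ≤ n →
      d n = (lam * (1 - r) * c * r ^ (n - 1) *
              (Real.sqrt (1 + c ^ 2 * r ^ (2 * (n - 1))) ^ 3)⁻¹) •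
            ((c * r ^ (n - 1)) • φ - ψ) ∧
      ‖d n‖ = lam * (1 - r) * c * r ^ (n - 1) / (1 + c ^ 2 * r ^ (2 * (n - 1))) := by
  -- basic scalar facts
  have hr0 : 0 ≤ r := by rw [hr]; positivity
  have hmur : mu = lam * r := by rw [hr]; field_simp
  -- helper norm/inner computations
  have hn1 : ∀ t : ℝ, ‖φ + t • ψ‖ = Real.sqrt (1 + t ^ 2) := by
    intro t
    have h1 : ‖φ + t • ψ‖ ^ 2 = 1 + t ^ 2 := by
      rw [norm_add_sq_real, real_inner_smul_right, hortho, norm_smul, hφn, hψn]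
      simp [sq_abs]
    rw [← h1, Real.sqrt_sq (norm_nonneg _)]
  have hn2 : ∀ t : ℝ, ‖t • φ - ψ‖ = Real.sqrt (1 + t ^ 2) := by
    intro t
    have h1 : ‖t • φ - ψ‖ ^ 2 = 1 + t ^ 2 := by
      rw [norm_sub_sq_real, real_inner_smul_left, hortho, norm_smul, hφn, hψn]
      simp [sq_abs]; ring
    rw [← h1, Real.sqrt_sq (norm_nonneg _)]
  have hin : ∀ a b : ℝ, ⟪φ + a • ψ, φ + b • ψ⟫ = 1 + a * b := by
    intro a b
    have h2 : ⟪ψ, φ⟫ = 0 := by rw [real_inner_comm]; exact hortho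
    simp [inner_add_left, inner_add_right, real_inner_smul_left, real_inner_smul_right,
      hortho, h2, real_inner_self_eq_norm_sq, hφn, hψn]
    ring
  -- positivity of the normalizing constants
  have hq : ∀ m : ℕ, (0:ℝ) < 1 + c ^ 2 * r ^ (2 * m) := by intro m; positivity
  have hs : ∀ m : ℕ, (0:ℝ) < Real.sqrt (1 + c ^ 2 * r ^ (2 * m)) := fun m =>
    Real.sqrt_pos.mpr (hq m)
  have hss : ∀ m : ℕ, Real.sqrt (1 + c ^ 2 * r ^ (2 * m)) ^ 2 = 1 + c ^ 2 * r ^ (2 * m) :=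
    fun m => Real.sq_sqrt (hq m).le
  -- main induction: closed form for x and u
  have key : ∀ m : ℕ,
      x m = (Real.sqrt (1 + c ^ 2 * r ^ (2 * m)))⁻¹ • (φ + (c * r ^ m) • ψ) ∧
      u (m + 1) = (lam * (Real.sqrt (1 + c ^ 2 * r ^ (2 * m)))⁻¹) •
        (φ + (c * r ^ (m + 1)) • ψ) := by
    intro m
    induction m with
    | zero =>
      have hx0 : x 0 = (Real.sqrt (1 + c ^ 2 * r ^ (2 * 0)))⁻¹ • (φ + (c * r ^ 0) • ψ) := by
        rw [hx 0, hu0]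
        have : ‖φ + c • ψ‖ = Real.sqrt (1 + c ^ 2) := hn1 c
        rw [this]
        norm_num
      refine ⟨hx0, ?_⟩
      rw [hurec 0, hx0]
      rw [map_smul, map_add, hφ]
      have : A ((c * r ^ 0) • ψ) = (c * r ^ 0) • (mu • ψ) := by rw [map_smul, hψ]
      rw [this, hmur]
      module
    | succ m ih =>
      obtain ⟨ihx, ihu⟩ := ih
      have hnu : ‖u (m + 1)‖ = lam * (Real.sqrt (1 + c ^ 2 * r ^ (2 * m)))⁻¹ *
          Real.sqrt (1 + c ^ 2 * r ^ (2 * (m + 1))) := by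
        rw [ihu, norm_smul, hn1, Real.norm_eq_abs]
        have h1 : |lam * (Real.sqrt (1 + c ^ 2 * r ^ (2 * m)))⁻¹| =
            lam * (Real.sqrt (1 + c ^ 2 * r ^ (2 * m)))⁻¹ := by
          rw [abs_of_pos]; positivity
        rw [h1]
        congr 2
        ring
      have hpos : (0:ℝ) < lam * (Real.sqrt (1 + c ^ 2 * r ^ (2 * m)))⁻¹ := by positivity
      have hxs : x (m + 1) = (Real.sqrt (1 + c ^ 2 * r ^ (2 * (m + 1))))⁻¹ •
          (φ + (c * r ^ (m + 1)) • ψ) := by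
        rw [hx (m + 1), hnu, ihu, smul_smul]
        congr 1
        rw [mul_inv]
        field_simp
      refine ⟨hxs, ?_⟩
      rw [hurec (m + 1), hxs]
      rw [map_smul, map_add, hφ]
      have : A ((c * r ^ (m + 1)) • ψ) = (c * r ^ (m + 1)) • (mu • ψ) := by
        rw [map_smul, hψ]
      rw [this, hmur]
      module
  -- now the main statement
  intro n hn
  obtain ⟨m, rfl⟩ : ∃ m, n = m + 1 := ⟨n - 1, (Nat.succ_pred_eq_of_pos hn).symm⟩
  have hm1 : m + 1 - 1 = m := rfl
  obtain ⟨hxm, hum⟩ := key m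
  set s : ℝ := Real.sqrt (1 + c ^ 2 * r ^ (2 * m)) with hsdef
  have hs0 : s ≠ 0 := (hs m).ne'
  have hq0 : (1 : ℝ) + c ^ 2 * r ^ (2 * m) ≠ 0 := (hq m).ne'
  have hs3 : (s ^ 3)⁻¹ = ((1 + c ^ 2 * r ^ (2 * m)) * s)⁻¹ := by
    rw [pow_succ, hss m]
  -- value of lamseq
  have hls : lamseq m = lam * (1 + (c * r ^ (m + 1)) * (c * r ^ m)) /
      (1 + c ^ 2 * r ^ (2 * m)) := by
    have h := hlamseq (m + 1) (by omega)
    rw [hm1] at h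
    rw [h, hum, hxm, real_inner_smul_left, real_inner_smul_right, hin]
    have h2 : lam * s⁻¹ * (s⁻¹ * (1 + (c * r ^ (m + 1)) * (c * r ^ m))) =
        lam * (1 + (c * r ^ (m + 1)) * (c * r ^ m)) / s ^ 2 := by ring
    rw [h2, hss m]
  have hdval : d (m + 1) = (lam * (1 - r) * c * r ^ m * (s ^ 3)⁻¹) •
      ((c * r ^ m) • φ - ψ) := by
    have hdm := hd (m + 1) (by omega)
    rw [hm1] at hdm
    rw [hdm, hum, hxm, hls, hs3]
    match_scalars <;> field_simp <;> ring
  constructor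
  · rw [hm1]; exact hdval
  · rw [hm1, hdval, norm_smul, hn2 (c * r ^ m), Real.norm_eq_abs]
    have habs : |lam * (1 - r) * c * r ^ m * (s ^ 3)⁻¹| =
        lam * (1 - r) * c * r ^ m * (s ^ 3)⁻¹ := by
      rw [abs_of_nonneg]
      have h1r : 0 < 1 - r := by
        rw [hr]; rw [sub_pos, div_lt_one hlam]; exact hmu
      positivity
    have hsq : Real.sqrt (1 + (c * r ^ m) ^ 2) = s := by
      rw [hsdef]
      congr 1
      ring
    rw [habs, hsq, hs3]
    rw [mul_inv]
    field_simp
end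

section
/- Let E be a real inner product space and φ, ψ ∈ E orthonormal vectors. Let λ > 0, 1/2 < r < 1, c > 0, and m ≥ 1 be such that c²·r^{2(m−1)}·(1 − r²) < 1. Define δₙ = (1 + c²·r^{2n})^{1/2}, v_{m+1} = λ·δ_m^{−1}·(φ + c·r^{m+1}·ψ), v_{m+2} = λ·δ_{m+1}^{−1}·(φ + c·r^{m+2}·ψ), the extrapolation parameter γ = −r·(1 + c²·r^{2(m−1)})/(1 + c²·r^{2m}), and the extrapolated iterate u_{m+2} = (1 − γ)·v_{m+2} + γ·v_{m+1}. Then there exist real numbers θ and η such that u_{m+2} = λ·δ_{m+1}^{−1}·((1 + θ)·φ + c·r^{m+3}·(1 + η)·ψ), with 0 < θ < 2·c²·r^{2m+1}·(1 − r²) and |η| < 2·c²·r^{2(m−1)}·(1 − r²). -/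
open RealInnerProductSpace

private lemma theta_pos (a r s θ : ℝ) (hr0 : 0 < r) (hs1 : s < 1)
    (hA0 : (0:ℝ) < 1 + a * r ^ 2) (h1a0 : (0:ℝ) < 1 + a)
    (hθA : θ * (1 + a * r ^ 2) = r * (1 + a) * (1 - s)) : 0 < θ := by
  nlinarith [hθA, hA0, mul_pos (mul_pos hr0 h1a0) (by linarith : (0:ℝ) < 1 - s)]

private lemma theta_lt (a r s θ : ℝ) (hr0 : 0 < r) (hr : 1/2 < r) (hr1 : r < 1)
    (ha0 : 0 < a) (h1mr2 : (0:ℝ) < 1 - r^2)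
    (hA0 : (0:ℝ) < 1 + a * r ^ 2) (h1a0 : (0:ℝ) < 1 + a)
    (hθA : θ * (1 + a * r ^ 2) = r * (1 + a) * (1 - s))
    (hP1 : (1 - s) * (1 + a * r ^ 2) < a * r ^ 2 * (1 - r ^ 2))
    (key : 1 + a < 2 * (1 + a * r ^ 2) ^ 2) :
    θ < 2 * (a * r ^ 3) * (1 - r ^ 2) := by
  nlinarith [hθA, hP1, key, hA0, mul_pos hA0 hA0,
    mul_lt_mul_of_pos_left hP1 (mul_pos hr0 h1a0),
    mul_lt_mul_of_pos_left key (by positivity : (0:ℝ) < a * r ^ 3 * (1 - r ^ 2))]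

private lemma eta_bounds (a r s η : ℝ) (hr0 : 0 < r) (hr : 1/2 < r) (hr1 : r < 1)
    (ha0 : 0 < a) (hs1 : s < 1) (h1mr2 : (0:ℝ) < 1 - r^2)
    (hA0 : (0:ℝ) < 1 + a * r ^ 2) (h1a0 : (0:ℝ) < 1 + a)
    (hηA : η * (r * (1 + a * r ^ 2)) = (1 + a) * (1 - s) - a * (1 - r) * (1 - r ^ 2))
    (hP1 : (1 - s) * (1 + a * r ^ 2) < a * r ^ 2 * (1 - r ^ 2))
    (key : 1 + a < 2 * (1 + a * r ^ 2) ^ 2) :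
    |η| < 2 * a * (1 - r ^ 2) := by
  rw [abs_lt]
  constructor
  · nlinarith [hηA, mul_pos hr0 hA0, mul_pos h1a0 (by linarith : (0:ℝ) < 1 - s),
      mul_pos (mul_pos ha0 h1mr2) (by linarith : (0:ℝ) < 3 * r - 1),
      mul_pos (mul_pos (mul_pos ha0 ha0) h1mr2) (by positivity : (0:ℝ) < r ^ 3)]
  · nlinarith [hηA, mul_pos hr0 (mul_pos hA0 hA0),
      mul_lt_mul_of_pos_left hP1 h1a0,
      mul_lt_mul_of_pos_left key (by positivity : (0:ℝ) < a * r * (1 - r ^ 2)),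
      mul_nonneg (mul_nonneg (mul_nonneg ha0.le (by linarith : (0:ℝ) ≤ 1 - r)) h1mr2.le) hA0.le,
      mul_nonneg (mul_nonneg (mul_nonneg (mul_nonneg h1a0.le ha0.le) hr0.le) h1mr2.le)
        (by linarith : (0:ℝ) ≤ 1 - r),
      mul_pos hA0 hA0]

set_option maxHeartbeats 1000000 in
/-- Base case of the analysis of the simple extrapolation method: the first
extrapolated iterate has its second eigencomponent of order `r^(m+3)` instead of
`r^(m+2)`. -/
theorem first_extrapolated_iterate {E : Type*}
    [NormedAddCommGroup E] [InnerProductSpace ℝ E]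
    (φ ψ : E) (hφn : ‖φ‖ = 1) (hψn : ‖ψ‖ = 1) (hortho : ⟪φ, ψ⟫ = 0)
    (lam r c : ℝ) (hlam : 0 < lam) (hr : 1 / 2 < r) (hr1 : r < 1) (hc : 0 < c)
    (m : ℕ) (hm : 1 ≤ m)
    (hsmall : c ^ 2 * r ^ (2 * (m - 1)) * (1 - r ^ 2) < 1)
    (δ : ℕ → ℝ) (hδ : ∀ n, δ n = Real.sqrt (1 + c ^ 2 * r ^ (2 * n)))
    (v1 v2 : E)
    (hv1 : v1 = (lam * (δ m)⁻¹) • (φ + (c * r ^ (m + 1)) • ψ))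
    (hv2 : v2 = (lam * (δ (m + 1))⁻¹) • (φ + (c * r ^ (m + 2)) • ψ))
    (γ : ℝ)
    (hγ : γ = -(r * (1 + c ^ 2 * r ^ (2 * (m - 1))) / (1 + c ^ 2 * r ^ (2 * m))))
    (u : E) (hu : u = (1 - γ) • v2 + γ • v1) :
    ∃ θ η : ℝ,
      u = (lam * (δ (m + 1))⁻¹) • ((1 + θ) • φ + (c * r ^ (m + 3) * (1 + η)) • ψ) ∧
      0 < θ ∧ θ < 2 * c ^ 2 * r ^ (2 * m + 1) * (1 - r ^ 2) ∧
      |η| < 2 * c ^ 2 * r ^ (2 * (m - 1)) * (1 - r ^ 2) := by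
  obtain ⟨k, rfl⟩ : ∃ k, m = k + 1 := ⟨m - 1, (Nat.succ_pred_eq_of_pos hm).symm⟩
  set a : ℝ := c ^ 2 * r ^ (2 * k) with ha
  have hr0 : (0:ℝ) < r := by linarith
  have ha0 : 0 < a := by positivity
  have hr2 : r ^ 2 < 1 := by nlinarith
  have h1mr2 : (0:ℝ) < 1 - r ^ 2 := by linarith
  have hA0 : (0:ℝ) < 1 + a * r ^ 2 := by positivity
  have h1a0 : (0:ℝ) < 1 + a := by linarith
  have e0 : c ^ 2 * r ^ (2 * (k + 1 - 1)) = a := by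
    rw [ha, Nat.add_sub_cancel]
  have e1 : c ^ 2 * r ^ (2 * (k + 1)) = a * r ^ 2 := by rw [ha]; ring
  have e2 : c ^ 2 * r ^ (2 * (k + 1 + 1)) = a * r ^ 2 * r ^ 2 := by rw [ha]; ring
  have hd1 : δ (k + 1) = Real.sqrt (1 + a * r ^ 2) := by rw [hδ, e1]
  have hd2 : δ (k + 1 + 1) = Real.sqrt (1 + a * r ^ 2 * r ^ 2) := by rw [hδ, e2]
  have hd1pos : 0 < δ (k + 1) := by rw [hd1]; positivity
  have hd2pos : 0 < δ (k + 1 + 1) := by rw [hd2]; positivity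
  have hd1sq : δ (k + 1) ^ 2 = 1 + a * r ^ 2 := by
    rw [hd1, Real.sq_sqrt]; positivity
  have hd2sq : δ (k + 1 + 1) ^ 2 = 1 + a * r ^ 2 * r ^ 2 := by
    rw [hd2, Real.sq_sqrt]; positivity
  set s : ℝ := δ (k + 1 + 1) / δ (k + 1) with hs
  have hs0 : 0 < s := div_pos hd2pos hd1pos
  have hs1 : s < 1 := by
    rw [hs, div_lt_one hd1pos, hd1, hd2]
    apply Real.sqrt_lt_sqrt (by positivity)
    nlinarith [mul_pos (mul_pos ha0 (by positivity : (0:ℝ) < r ^ 2)) h1mr2]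
  have hssq : s ^ 2 * (1 + a * r ^ 2) = 1 + a * r ^ 2 * r ^ 2 := by
    have h : s ^ 2 * δ (k + 1) ^ 2 = δ (k + 1 + 1) ^ 2 := by
      rw [hs, div_pow]; field_simp
    rw [hd1sq, hd2sq] at h; exact h
  have hγ' : γ = -(r * (1 + a) / (1 + a * r ^ 2)) := by
    rw [hγ, e0, e1]
  have hδinv : (δ (k + 1))⁻¹ = s * (δ (k + 1 + 1))⁻¹ := by
    rw [hs]; field_simp
  clear_value a s
  have hP1 : (1 - s) * (1 + a * r ^ 2) < a * r ^ 2 * (1 - r ^ 2) := by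
    nlinarith [mul_pos (mul_pos hs0 (by linarith : (0:ℝ) < 1 - s)) hA0]
  have key : 1 + a < 2 * (1 + a * r ^ 2) ^ 2 := by
    nlinarith [mul_pos ha0 (mul_pos (by linarith : (0:ℝ) < 2 * r - 1)
      (by linarith : (0:ℝ) < 2 * r + 1)), sq_nonneg (a * r ^ 2)]
  have hθA : γ * (s - 1) * (1 + a * r ^ 2) = r * (1 + a) * (1 - s) := by
    rw [hγ']; field_simp; ring
  have hηA : (((1 - γ) * r + γ * s) / r ^ 2 - 1) * (r * (1 + a * r ^ 2))
      = (1 + a) * (1 - s) - a * (1 - r) * (1 - r ^ 2) := by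
    rw [hγ']; field_simp; ring
  refine ⟨γ * (s - 1), ((1 - γ) * r + γ * s) / r ^ 2 - 1, ?_, ?_, ?_, ?_⟩
  · subst hu hv1 hv2
    rw [hδinv]
    match_scalars
    · ring
    · field_simp [hr0.ne']
      ring
  · exact theta_pos a r s _ hr0 hs1 hA0 h1a0 hθA
  · have hgoal_eq : 2 * c ^ 2 * r ^ (2 * (k + 1) + 1) * (1 - r ^ 2)
        = 2 * (a * r ^ 3) * (1 - r ^ 2) := by rw [ha]; ring
    rw [hgoal_eq]
    exact theta_lt a r s _ hr0 hr hr1 ha0 h1mr2 hA0 h1a0 hθA hP1 key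
  · have hgoal_eq : 2 * c ^ 2 * r ^ (2 * (k + 1 - 1)) * (1 - r ^ 2)
        = 2 * a * (1 - r ^ 2) := by rw [ha, Nat.add_sub_cancel]; ring
    rw [hgoal_eq]
    exact eta_bounds a r s _ hr0 hr hr1 ha0 hs1 h1mr2 hA0 h1a0 hηA hP1 key
end
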